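/- For every n ≥ 2, the number of fixed-point-free permutations of [n] with exactly one descent is 2^{n−2}; that is, #{π ∈ S_n : fix(π) = 0 and des(π) = 1} = 2^{n−2}. -/

import Mathlib

open scoped Classical

namespace KArr

/-- Positive reduction of a word over ℤ: each positive letter is replaced by its
rank among the distinct positive letters of the word; negative letters unchanged. -/
def posReduce (w : List ℤ) : List ℤ :=
  w.map fun x => if 0 < x then ((w.toFinset.filter fun y => 0 < y ∧ y ≤ x).card : ℤ) else x

/-- The set of descents of a word (1-indexed: `i` is a descent iff `w_i > w_{i+1}`). -/
def desSet (w : List ℤ) : Finset ℕ :=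
  (Finset.range w.length).filter fun i => 1 ≤ i ∧ w.getD i 0 < w.getD (i - 1) 0

/-- The number of descents of a word. -/
def desNum (w : List ℤ) : ℕ := (desSet w).card

/-- The subword of positive letters. -/
def posPart (w : List ℤ) : List ℤ := w.filter fun x => decide (0 < x)

/-- A `k`-arrangement of `[n]`: a permutation together with a color in `Fin k`
attached to each fixed point (encoded as a total coloring that is `0` off the
fixed points). -/
abbrev Arrangement (n k : ℕ) :=
  {x : Equiv.Perm (Fin n) × (Fin n → Fin k) // ∀ j, x.1 j ≠ j → (x.2 j : ℕ) = 0}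

/-- The derangement form of a `k`-arrangement: replace each fixed point by the
negative letter recording its color, then positively reduce.  (Color `c : Fin k`
encodes the letter `¬(c+1) = -(c+1)`.) -/
def dfWord {n k : ℕ} (a : Arrangement n k) : List ℤ :=
  posReduce <| (List.finRange n).map fun i =>
    if a.1.1 i = i then -(((a.1.2 i : ℕ) : ℤ) + 1) else ((a.1.1 i : ℕ) : ℤ) + 1

/-- The permutation form of a `k`-arrangement: replace each fixed point whose
color is not `¬k` by the corresponding negative letter, then positively reduce. -/
def pfWord {n k : ℕ} (a : Arrangement n k) : List ℤ :=
  posReduce <| (List.finRange n).map fun i =>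
    if a.1.1 i = i ∧ (a.1.2 i : ℕ) + 1 ≠ k then -(((a.1.2 i : ℕ) : ℤ) + 1)
    else ((a.1.1 i : ℕ) : ℤ) + 1

/-- `fix_i(a)`: the number of fixed points of the base permutation with color `c`. -/
noncomputable def fixCount {n k : ℕ} (a : Arrangement n k) (c : Fin k) : ℕ :=
  Nat.card {i : Fin n // a.1.1 i = i ∧ a.1.2 i = c}

/-- `DEZ(a)`, the descent set of the derangement form. -/
def DEZset {n k : ℕ} (a : Arrangement n k) : Finset ℕ := desSet (dfWord a)

/-- `DES(a)`, the descent set of the permutation form. -/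
def DESset {n k : ℕ} (a : Arrangement n k) : Finset ℕ := desSet (pfWord a)

/-- `dez(a)`, the number of descents of the derangement form. -/
def dez {n k : ℕ} (a : Arrangement n k) : ℕ := desNum (dfWord a)

/-- `des(a)`, the number of descents of the permutation form. -/
def des {n k : ℕ} (a : Arrangement n k) : ℕ := desNum (pfWord a)

/-- `Der(a)`, the derangement part: the positive subword of the derangement form. -/
def Der {n k : ℕ} (a : Arrangement n k) : List ℤ := posPart (dfWord a)

/-- One-line notation of a permutation of `[n]`, as a word over `ℤ` with letters `1,…,n`. -/
def oneLine {n : ℕ} (π : Equiv.Perm (Fin n)) : List ℤ :=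
  (List.finRange n).map fun i => ((π i : ℕ) : ℤ) + 1

/-- A word `w` contains the pattern `p` if some subsequence of `w` of the same
length as `p` is order-isomorphic to `p` (entrywise strict inequalities match). -/
def Contains (w p : List ℤ) : Prop :=
  ∃ s : List ℤ, s.Sublist w ∧ s.length = p.length ∧
    ∀ i j, i < p.length → j < p.length →
      (s.getD i 0 < s.getD j 0 ↔ p.getD i 0 < p.getD j 0)

/-- A word avoids a pattern if it does not contain it. -/
def Avoids (w p : List ℤ) : Prop := ¬ Contains w p


/-- `dez`-word of a permutation: replace each fixed point by `¬1 = -1`,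
then positively reduce (the `1`-arrangement derangement form). -/
def dzWordPerm {n : ℕ} (π : Equiv.Perm (Fin n)) : List ℤ :=
  posReduce <| (List.finRange n).map fun i =>
    if π i = i then (-1 : ℤ) else ((π i : ℕ) : ℤ) + 1

/-- The weak derangement part `Der_k(a)`: the derangement form with all letters `¬k` removed. -/
def wDer {n k : ℕ} (a : Arrangement n k) : List ℤ :=
  (dfWord a).filter fun x => decide (x ≠ -(k : ℤ))

/-- For a word `w` which is a derangement form, position `j` (0-indexed) of `w` is an
excedance of the base permutation iff the letter is positive and exceeds the number
of positive letters among the first `j+1` letters. -/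
def isExcAt (w : List ℤ) (j : ℕ) : Prop :=
  ((((w.take (j + 1)).filter fun x => decide (0 < x)).length : ℤ)) < w.getD j 0

/-- `e_i = E` for the (1-indexed) letter positions `0 ≤ i ≤ m+1` of `w`, with the
boundary conventions `e_0 = e_{m+1} = E`. -/
def slotE (w : List ℤ) (i : ℕ) : Prop :=
  i = 0 ∨ i = w.length + 1 ∨ isExcAt w (i - 1)

/-- `w_i > w_{i+1}` (1-indexed letters) with the conventions `w_0 = w_{m+1} = +∞`;
this is the descent condition attached to slot `i`, `0 ≤ i ≤ m`. -/
def slotGt (w : List ℤ) (i : ℕ) : Prop :=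
  i = 0 ∨ (i < w.length ∧ w.getD i 0 < w.getD (i - 1) 0)

/-- Slot `i` is of type I: `w_i > w_{i+1}` and `(e_i, e_{i+1}) = (E, N)`. -/
def typeI (w : List ℤ) (i : ℕ) : Prop := slotGt w i ∧ slotE w i ∧ ¬ slotE w (i + 1)

/-- Slot `i` is of type II: `w_i ≤ w_{i+1}` and `(e_i, e_{i+1}) = (N, E)`. -/
def typeII (w : List ℤ) (i : ℕ) : Prop := ¬ slotGt w i ∧ ¬ slotE w i ∧ slotE w (i + 1)

/-- Slot `i` is of type III: `w_i ≤ w_{i+1}` and `(e_i, e_{i+1}) ≠ (N, E)`. -/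
def typeIII (w : List ℤ) (i : ℕ) : Prop := ¬ slotGt w i ∧ ¬ (¬ slotE w i ∧ slotE w (i + 1))

/-- Slot `i` is of type IV: `w_i > w_{i+1}` and `(e_i, e_{i+1}) ≠ (E, N)`. -/
def typeIV (w : List ℤ) (i : ℕ) : Prop := slotGt w i ∧ ¬ (slotE w i ∧ ¬ slotE w (i + 1))

/-- The length `s_i` of the `i`-th slot of the word `u` (a derangement form),
where the slot letters are the letters equal to `c` (`= ¬k`). -/
def slotLen (u : List ℤ) (c : ℤ) (i : ℕ) : ℕ :=
  let L := (List.range u.length).filter fun j => decide (u.getD j 0 ≠ c)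
  (if i < L.length then L.getD i 0 else u.length) - (if i = 0 then 0 else L.getD (i - 1) 0 + 1)

/-- The number of peaks of a word: indices `i` (1-indexed, `2 ≤ i ≤ n-1`)
with `w_{i-1} < w_i > w_{i+1}`. -/
def peakNum (w : List ℤ) : ℕ :=
  ((List.range w.length).filter fun i => decide (0 < i ∧ i + 1 < w.length ∧
    w.getD (i - 1) 0 < w.getD i 0 ∧ w.getD (i + 1) 0 < w.getD i 0)).length

/-- Number of fixed points of a permutation. -/
noncomputable def fixNum {n : ℕ} (π : Equiv.Perm (Fin n)) : ℕ :=
  Nat.card {i : Fin n // π i = i}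

/-- Number of excedances of a permutation. -/
noncomputable def excNum {n : ℕ} (π : Equiv.Perm (Fin n)) : ℕ :=
  Nat.card {i : Fin n // i < π i}

/-- Number of anti-excedances of a permutation. -/
noncomputable def aexcNum {n : ℕ} (π : Equiv.Perm (Fin n)) : ℕ :=
  Nat.card {i : Fin n // π i < i}

/-- `ldes` of a word: the smallest `i` which is a descent or equals the length
(0 for the empty word). -/
def ldesW (w : List ℤ) : ℕ :=
  (((List.range (w.length + 1)).filter fun i =>
    decide ((1 ≤ i ∧ i < w.length ∧ w.getD i 0 < w.getD (i - 1) 0) ∨ i = w.length))).headD 0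

/-- `rdes` of a word: the length minus the position of the rightmost descent
(`sSup ∅ = 0` when there is no descent). -/
def rdesW (w : List ℤ) : ℕ :=
  w.length - ((List.range w.length).filter fun i =>
    decide (1 ≤ i ∧ w.getD i 0 < w.getD (i - 1) 0)).foldr max 0

/-- Number of crossing descents of a permutation: (1-indexed) descents `i` with
`σ(i) ≥ i+1 ≥ σ(i+1)`. -/
def xdesW (w : List ℤ) : ℕ :=
  ((List.range w.length).filter fun i : ℕ =>
    decide (1 ≤ i ∧ (i : ℤ) + 1 ≤ w.getD (i - 1) 0 ∧ w.getD i 0 ≤ (i : ℤ) + 1)).length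

/-- Number of crossing descents of a permutation. -/
def xdesNum {n : ℕ} (σ : Equiv.Perm (Fin n)) : ℕ := xdesW (oneLine σ)

/-- A height sequence `d` encodes a Dyck path: it is weakly increasing and `d_i ≤ i - 1`
(1-indexed), i.e. `d.getD i 0 ≤ i` (0-indexed). -/
def IsDyck (d : List ℕ) : Prop :=
  List.Pairwise (· ≤ ·) d ∧ ∀ i < d.length, d.getD i 0 ≤ i

/-- Number of hills of a Dyck path: east steps of height equal to their index that
touch the diagonal and are immediately followed by a north step. -/
def hillNum (d : List ℕ) : ℕ :=
  ((List.range d.length).filter fun i => decide (d.getD i 0 = i ∧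
    (i + 1 = d.length ∨ d.getD i 0 < d.getD (i + 1) 0))).length

/-- Number of segments of a Dyck path: maximal runs of at least two consecutive
equal heights (counted by their starting index). -/
def segNum (d : List ℕ) : ℕ :=
  ((List.range d.length).filter fun i => decide (i + 1 < d.length ∧
    d.getD i 0 = d.getD (i + 1) 0 ∧ (i = 0 ∨ d.getD (i - 1) 0 ≠ d.getD i 0))).length

/-- `lseg`: the (1-indexed) position of the last step of the leftmost segment,
or `n+1` if there is no segment. -/
def lsegNum (d : List ℕ) : ℕ :=
  (((List.range (d.length + 2)).filter fun i =>
    decide ((2 ≤ i ∧ i ≤ d.length ∧ d.getD (i - 2) 0 = d.getD (i - 1) 0 ∧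
      (i = d.length ∨ d.getD (i - 1) 0 ≠ d.getD i 0)) ∨ i = d.length + 1))).headD 0

/-- Dyck paths of semilength `n`, encoded as monotone functions `Fin n → Fin (n+1)`
bounded by the diagonal (their height sequences). -/
def DyckFinset (n : ℕ) : Finset (Fin n → Fin (n + 1)) :=
  Finset.univ.filter fun f =>
    (∀ i j : Fin n, i ≤ j → f i ≤ f j) ∧ ∀ i : Fin n, (f i : ℕ) ≤ (i : ℕ)

/-- The height sequence of a function `Fin n → Fin (n+1)` as a list. -/
def hList {n : ℕ} (f : Fin n → Fin (n + 1)) : List ℕ :=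
  (List.finRange n).map fun i => (f i : ℕ)

/-! A permutation with a single descent, at position `k`, lists a `k`-set `S` increasingly and
then `Sᶜ` increasingly, so it is determined by `S`. A strictly increasing run climbs by at least
one per step, so a fixed point in the first run forces `π 0 = 0`, i.e. `0 ∈ S`, and one in the
second run forces `π (n-1) = n-1`, i.e. `n-1 ∉ S`. Conversely, when `0 ∉ S ∋ n-1` the descent at
`#S` does occur. So the derangements with one descent correspond to the sets `S ⊆ Fin n` with
`0 ∉ S` and `n-1 ∈ S`, of which there are `2^(n-2)`. -/

open Finset

lemma val_add_sub_le_of_strictMonoOn {k l : ℕ} {f : Fin k → Fin l} {i j : Fin k}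
    (hf : StrictMonoOn f (Set.Icc i j)) (hij : i ≤ j) : (f i : ℕ) + (j - i) ≤ f j := by
  have hmaps : ∀ x ∈ Icc i j, f x ∈ Icc (f i) (f j) := fun x hx => by
    rw [mem_Icc] at hx ⊢
    exact ⟨hf.monotoneOn ⟨le_rfl, hij⟩ hx hx.1, hf.monotoneOn hx ⟨hij, le_rfl⟩ hx.2⟩
  have hcard := card_le_card_of_injOn f hmaps (hf.injOn.mono (by simp))
  have hle : f i ≤ f j := hf.monotoneOn ⟨le_rfl, hij⟩ ⟨hij, le_rfl⟩ hij
  rw [Fin.card_Icc, Fin.card_Icc] at hcard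
  rw [Fin.le_def] at hle hij
  omega

lemma card_finset_notMem_and_mem {α : Type*} [Fintype α] {a b : α} (hab : a ≠ b) :
    Nat.card {S : Finset α // a ∉ S ∧ b ∈ S} = 2 ^ (Nat.card α - 2) := by
  let U : Finset α := (univ.erase a).erase b
  have e : {S : Finset α // a ∉ S ∧ b ∈ S} ≃ U.powerset :=
    { toFun S := ⟨S.1.erase b, mem_powerset.2 fun x hx => by
        simp only [U, mem_erase, mem_univ, and_true] at hx ⊢
        exact ⟨hx.1, fun hxa => S.2.1 (hxa ▸ hx.2)⟩⟩
      invFun T := ⟨insert b T.1, by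
        refine ⟨fun ha => ?_, mem_insert_self b _⟩
        rcases mem_insert.1 ha with h | h
        · exact hab h
        · simpa [U] using mem_powerset.1 T.2 h⟩
      left_inv S := Subtype.ext (insert_erase S.2.2)
      right_inv T := Subtype.ext (erase_insert fun hb => by simpa [U] using mem_powerset.1 T.2 hb) }
  rw [Nat.card_congr e, Nat.card_eq_fintype_card, Fintype.card_coe, card_powerset,
    card_erase_of_mem (by simpa [U] using hab.symm), card_erase_of_mem (mem_univ a),
    card_univ, Nat.card_eq_fintype_card, Nat.sub_sub]

lemma monotoneOn_getD_of_forall_notMem_desSet {w : List ℤ} {s : Set ℕ} (hs : s.OrdConnected)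
    (hlen : ∀ i ∈ s, i < w.length) (hdes : ∀ i ∈ s, i + 1 ∈ s → i + 1 ∉ desSet w) :
    MonotoneOn (w.getD · 0) s := by
  refine monotoneOn_of_le_add_one hs fun i _ hi hi' => ?_
  have := hdes i hi hi'
  simp only [desSet, mem_filter, mem_range, not_and, not_lt] at this
  simpa using this (hlen _ hi') (by omega)

section Permutations

variable {n : ℕ}

lemma fixNum_eq_zero_iff (π : Equiv.Perm (Fin n)) : fixNum π = 0 ↔ ∀ i, π i ≠ i := by
  simp [fixNum, Fintype.card_eq_zero_iff, isEmpty_subtype]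

lemma oneLine_length (π : Equiv.Perm (Fin n)) : (oneLine π).length = n := by
  simp [oneLine]

lemma oneLine_getD (π : Equiv.Perm (Fin n)) (i : Fin n) :
    (oneLine π).getD i 0 = ((π i : ℕ) : ℤ) + 1 := by
  simp [oneLine]

lemma mem_desSet_oneLine (π : Equiv.Perm (Fin n)) (j : ℕ) :
    j ∈ desSet (oneLine π) ↔ ∃ (h : j < n) (hj : 1 ≤ j), π ⟨j, h⟩ < π ⟨j - 1, by omega⟩ := by
  simp only [desSet, mem_filter, mem_range, oneLine_length]
  refine ⟨fun ⟨h, hj, hlt⟩ => ⟨h, hj, ?_⟩, fun ⟨h, hj, hlt⟩ => ⟨h, hj, ?_⟩⟩ <;>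
  · have e₁ := oneLine_getD π ⟨j, h⟩
    have e₂ := oneLine_getD π ⟨j - 1, by omega⟩
    simp only at e₁ e₂
    rw [Fin.lt_def] at *
    omega

lemma strictMonoOn_of_monotoneOn_getD_oneLine {π : Equiv.Perm (Fin n)} {s : Set ℕ}
    (h : MonotoneOn ((oneLine π).getD · 0) s) : StrictMonoOn π {i | (i : ℕ) ∈ s} := by
  intro i hi j hj hij
  have := h hi hj (Fin.lt_def.mp hij).le
  simp only [oneLine_getD] at this
  exact lt_of_le_of_ne (by rw [Fin.le_def]; omega) (π.injective.ne hij.ne)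

/-- The permutation whose one-line notation lists `S` increasingly, then `Sᶜ` increasingly. -/
noncomputable def grassmannPerm (S : Finset (Fin n)) : Equiv.Perm (Fin n) :=
  (finCongr (Nat.add_sub_of_le (by simpa using S.card_le_univ))).symm.trans <|
    finSumFinEquiv.symm.trans <| finSumEquivOfFinset rfl (by simp [card_compl])

lemma grassmannPerm_apply_of_lt (S : Finset (Fin n)) (i : Fin n) (hi : (i : ℕ) < #S) :
    grassmannPerm S i = S.orderEmbOfFin rfl ⟨i, hi⟩ := by
  have : (finCongr (Nat.add_sub_of_le (by simpa using S.card_le_univ))).symm i =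
      Fin.castAdd (n - #S) ⟨i, hi⟩ := rfl
  simp only [grassmannPerm, Equiv.trans_apply, this, finSumFinEquiv_symm_apply_castAdd,
    finSumEquivOfFinset_inl]

lemma grassmannPerm_apply_of_le (S : Finset (Fin n)) (i : Fin n) (hi : #S ≤ (i : ℕ)) :
    grassmannPerm S i =
      Sᶜ.orderEmbOfFin (show #Sᶜ = n - #S by simp [card_compl]) ⟨i - #S, by omega⟩ := by
  have : (finCongr (Nat.add_sub_of_le (by simpa using S.card_le_univ))).symm i =
      Fin.natAdd #S ⟨i - #S, by omega⟩ :=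
    Fin.ext (by simp only [finCongr_symm, finCongr_apply, Fin.val_cast, Fin.natAdd_mk]; omega)
  simp only [grassmannPerm, Equiv.trans_apply, this, finSumFinEquiv_symm_apply_natAdd,
    finSumEquivOfFinset_inr]

lemma grassmannPerm_mem_iff (S : Finset (Fin n)) (i : Fin n) :
    grassmannPerm S i ∈ S ↔ (i : ℕ) < #S := by
  by_cases hi : (i : ℕ) < #S
  · simp [grassmannPerm_apply_of_lt S i hi, hi]
  · rw [grassmannPerm_apply_of_le S i (by omega), iff_false_intro hi, iff_false, ← mem_compl]
    exact orderEmbOfFin_mem _ _ _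

lemma mem_iff_grassmannPerm_symm_lt (S : Finset (Fin n)) (x : Fin n) :
    x ∈ S ↔ ((grassmannPerm S).symm x : ℕ) < #S := by
  rw [← grassmannPerm_mem_iff, Equiv.apply_symm_apply]

lemma strictMonoOn_grassmannPerm_left (S : Finset (Fin n)) :
    StrictMonoOn (grassmannPerm S) {i | (i : ℕ) < #S} := by
  intro a ha b hb hab
  rw [grassmannPerm_apply_of_lt S a ha, grassmannPerm_apply_of_lt S b hb]
  exact (S.orderEmbOfFin rfl).strictMono hab

lemma strictMonoOn_grassmannPerm_right (S : Finset (Fin n)) :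
    StrictMonoOn (grassmannPerm S) {i | #S ≤ (i : ℕ)} := by
  intro a (ha : #S ≤ (a : ℕ)) b hb hab
  rw [grassmannPerm_apply_of_le S a ha, grassmannPerm_apply_of_le S b hb]
  exact OrderEmbedding.strictMono _ (Fin.mk_lt_mk.2 (by have := Fin.lt_def.1 hab; omega))

lemma eq_grassmannPerm {σ : Equiv.Perm (Fin n)} {S : Finset (Fin n)}
    (hS : ∀ i, σ i ∈ S ↔ (i : ℕ) < #S) (h₁ : StrictMonoOn σ {i | (i : ℕ) < #S})
    (h₂ : StrictMonoOn σ {i | #S ≤ (i : ℕ)}) : σ = grassmannPerm S := by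
  have hk : #S ≤ n := by simpa using S.card_le_univ
  ext1 i
  by_cases hi : (i : ℕ) < #S
  · rw [grassmannPerm_apply_of_lt S i hi]
    exact congrFun (orderEmbOfFin_unique rfl (f := fun j : Fin #S => σ ⟨j, by omega⟩)
      (fun j => (hS _).2 j.isLt) (fun a b hab => h₁ a.isLt b.isLt hab)) ⟨i, hi⟩
  · have hf := orderEmbOfFin_unique (show #Sᶜ = n - #S by simp [card_compl])
      (f := fun j : Fin (n - #S) => σ ⟨#S + j, by omega⟩) (fun j => by simp [hS])
      (fun a b hab => h₂ (by simp) (by simp) (Fin.mk_lt_mk.2 (by have := Fin.lt_def.1 hab; omega)))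
    rw [grassmannPerm_apply_of_le S i (by omega), ← hf]
    exact congrArg σ (Fin.ext (by simp only; omega))

lemma exists_eq_grassmannPerm_of_desSet_eq_singleton {π : Equiv.Perm (Fin n)} {d : ℕ}
    (h : desSet (oneLine π) = {d}) : ∃ S : Finset (Fin n), π = grassmannPerm S := by
  obtain ⟨hd, -⟩ := (mem_desSet_oneLine π d).1 (h ▸ mem_singleton_self d)
  let S := (Iio (⟨d, hd⟩ : Fin n)).map π.toEmbedding
  have hcard : #S = d := by simp [S]
  have hlen : (oneLine π).length = n := oneLine_length π
  refine ⟨S, eq_grassmannPerm (fun i => ?_) ?_ ?_⟩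
  · simp [S, hcard, Fin.lt_def]
  · rw [hcard]
    refine strictMonoOn_of_monotoneOn_getD_oneLine
      (monotoneOn_getD_of_forall_notMem_desSet Set.ordConnected_Iio ?_ ?_)
    · intro i hi; simp only [Set.mem_Iio] at hi; omega
    · intro i _ hi; rw [h, mem_singleton]; simp only [Set.mem_Iio] at hi; omega
  · rw [hcard]
    refine (strictMonoOn_of_monotoneOn_getD_oneLine
      (monotoneOn_getD_of_forall_notMem_desSet (s := Set.Ico d n) Set.ordConnected_Ico ?_ ?_)).mono
      fun i hi => ⟨hi, i.isLt⟩
    · intro i hi; simp only [Set.mem_Ico] at hi; omega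
    · intro i hi _; rw [h, mem_singleton]; simp only [Set.mem_Ico] at hi; omega

end Permutations

section Derangements

variable {m : ℕ}

lemma forall_grassmannPerm_ne_iff (S : Finset (Fin (m + 1))) :
    (∀ i, grassmannPerm S i ≠ i) ↔ 0 ∉ S ∧ Fin.last m ∈ S := by
  constructor
  · intro h
    refine ⟨fun h0 => h 0 ?_, Classical.byContradiction fun hl => h (Fin.last m) ?_⟩
    · have hj : ((grassmannPerm S).symm 0 : ℕ) < #S := by
        rwa [← mem_iff_grassmannPerm_symm_lt]
      have := (strictMonoOn_grassmannPerm_left S).monotoneOn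
        (lt_of_le_of_lt (Nat.zero_le _) hj) hj (Fin.zero_le _)
      rwa [Equiv.apply_symm_apply, Fin.le_zero_iff] at this
    · have hj : ¬((grassmannPerm S).symm (Fin.last m) : ℕ) < #S := by
        rwa [← mem_iff_grassmannPerm_symm_lt]
      have := (strictMonoOn_grassmannPerm_right S).monotoneOn (not_lt.1 hj)
        (le_trans (not_lt.1 hj) (Fin.le_last _)) (Fin.le_last _)
      rwa [Equiv.apply_symm_apply, Fin.last_le_iff] at this
  · rintro ⟨h0, hl⟩ i hi
    by_cases hik : (i : ℕ) < #S
    · have hmono : StrictMonoOn (grassmannPerm S) (Set.Icc 0 i) :=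
        (strictMonoOn_grassmannPerm_left S).mono fun j hj => (Fin.le_def.1 hj.2).trans_lt hik
      have hgap := val_add_sub_le_of_strictMonoOn hmono (Fin.zero_le i)
      rw [hi, Fin.val_zero] at hgap
      have h00 : grassmannPerm S 0 = 0 := Fin.ext (by rw [Fin.val_zero]; omega)
      exact h0 (h00 ▸ (grassmannPerm_mem_iff S 0).2 (lt_of_le_of_lt (Nat.zero_le _) hik))
    · have hmono : StrictMonoOn (grassmannPerm S) (Set.Icc i (Fin.last m)) :=
        (strictMonoOn_grassmannPerm_right S).mono fun j hj =>
          (not_lt.1 hik).trans (Fin.le_def.1 hj.1)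
      have hgap := val_add_sub_le_of_strictMonoOn hmono (Fin.le_last i)
      rw [hi, Fin.val_last] at hgap
      have hfix : grassmannPerm S (Fin.last m) = Fin.last m :=
        Fin.ext (by have := (grassmannPerm S (Fin.last m)).isLt; rw [Fin.val_last]; omega)
      have hlast := (grassmannPerm_mem_iff S (Fin.last m)).1 (by rwa [hfix])
      rw [Fin.val_last] at hlast
      omega

lemma desSet_oneLine_grassmannPerm {S : Finset (Fin (m + 1))} (h0 : 0 ∉ S) (hS : S.Nonempty) :
    desSet (oneLine (grassmannPerm S)) = {#S} := by
  have hk : #S < m + 1 := by simpa using card_lt_univ_of_notMem h0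
  have hpos : 0 < #S := hS.card_pos
  ext j
  rw [mem_singleton, mem_desSet_oneLine]
  constructor
  · rintro ⟨hj, hj1, hlt⟩
    by_contra hne
    rcases Nat.lt_or_gt_of_ne hne with h | h
    · exact hlt.asymm (strictMonoOn_grassmannPerm_left S (show j - 1 < #S by omega) h
        (Fin.mk_lt_mk.2 (by omega)))
    · exact hlt.asymm (strictMonoOn_grassmannPerm_right S (show #S ≤ j - 1 by omega)
        (show #S ≤ j by omega) (Fin.mk_lt_mk.2 (by omega)))
  · rintro rfl
    refine ⟨hk, hpos, ?_⟩
    have hz : ¬((grassmannPerm S).symm 0 : ℕ) < #S := by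
      rwa [← mem_iff_grassmannPerm_symm_lt]
    have hle : grassmannPerm S ⟨#S, hk⟩ ≤ 0 := by
      simpa using (strictMonoOn_grassmannPerm_right S).monotoneOn (a := ⟨#S, hk⟩) (le_refl #S)
        (not_lt.1 hz) (Fin.le_def.2 (not_lt.1 hz))
    have hmem : grassmannPerm S ⟨#S - 1, by omega⟩ ∈ S :=
      (grassmannPerm_mem_iff S _).2 (by simp only; omega)
    exact hle.trans_lt (Fin.pos_iff_ne_zero.2 (ne_of_mem_of_not_mem hmem h0))

lemma card_derangement_desNum_eq_one_eq_card_finset (m : ℕ) :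
    Nat.card {π : Equiv.Perm (Fin (m + 1)) // fixNum π = 0 ∧ desNum (oneLine π) = 1} =
      Nat.card {S : Finset (Fin (m + 1)) // 0 ∉ S ∧ Fin.last m ∈ S} := by
  have hdes (S : Finset (Fin (m + 1))) (hS : 0 ∉ S ∧ Fin.last m ∈ S) :
      desSet (oneLine (grassmannPerm S)) = {#S} :=
    desSet_oneLine_grassmannPerm hS.1 ⟨_, hS.2⟩
  refine (Nat.card_eq_of_bijective (fun S => ⟨grassmannPerm S.1,
    (fixNum_eq_zero_iff _).2 ((forall_grassmannPerm_ne_iff S.1).2 S.2),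
    by rw [desNum, hdes S.1 S.2, card_singleton]⟩) ⟨?_, ?_⟩).symm
  · rintro ⟨S, hS⟩ ⟨T, hT⟩ h
    have hST : grassmannPerm S = grassmannPerm T := congrArg Subtype.val h
    have hcard : #S = #T := singleton_injective ((hdes S hS).symm.trans (hST ▸ hdes T hT))
    ext x
    rw [mem_iff_grassmannPerm_symm_lt, mem_iff_grassmannPerm_symm_lt, hST, hcard]
  · rintro ⟨π, hfix, hdes₁⟩
    obtain ⟨d, hd⟩ := card_eq_one.1 hdes₁
    obtain ⟨S, rfl⟩ := exists_eq_grassmannPerm_of_desSet_eq_singleton hd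
    exact ⟨⟨S, (forall_grassmannPerm_ne_iff S).1 ((fixNum_eq_zero_iff _).1 hfix)⟩, rfl⟩

end Derangements

theorem stmt19 (n : ℕ) (hn : 2 ≤ n) :
    Nat.card {π : Equiv.Perm (Fin n) // fixNum π = 0 ∧ desNum (oneLine π) = 1} =
    2 ^ (n - 2) := by
  obtain ⟨m, rfl⟩ : ∃ m, n = m + 1 := ⟨n - 1, by omega⟩
  have h0 : (0 : Fin (m + 1)) ≠ Fin.last m := fun h => by simp [Fin.ext_iff] at h; omega
  rw [card_derangement_desNum_eq_one_eq_card_finset, card_finset_notMem_and_mem h0, Nat.card_fin]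

end KArr
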